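/- Let Γ be a simplicial complex with Γ = Δ_d(Γ^{[d]}), and let Ω be an orientably-vertex-minimal d-dimensional cycle in Γ^{[d]} that is not d-complete, with vertex set W = V(Ω). Then the induced subcomplex Γ_W has dimension d, i.e. Γ_W contains no face of cardinality greater than d+1. -/

import Mathlib

/-! If `Γ_{V(Ω)}` had a face with more than `d + 1` vertices, it would contain a set `S` of `d + 2`
vertices of `Ω` all of whose `(d + 1)`-subsets are faces of `Γ`. The boundary of the simplex on
`S` is then an orientable `d`-cycle in `Γ^{[d]}` (orientable because `∂∂ = 0`), so orientable
vertex-minimality forces `V(Ω) = S`. But a `d`-cycle on `d + 2` vertices is the whole boundary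
of that simplex: once `S \ {u}` is a `d`-face, the `(d - 1)`-face `S \ {u, x}` must lie in an even
number of `d`-faces, and `S \ {x}` is the only other candidate. So `Ω` would be `d`-complete. -/

open Finset

namespace ChordedPaper

variable {V : Type*} [DecidableEq V] [Fintype V]

/-- A simplicial complex: a set of finsets (faces) closed under taking subsets.
(The vertices of the complex are the vertices of its faces, so all singletons of
vertices are automatically faces.) -/
def IsComplex (K : Set (Finset V)) : Prop :=
  ∀ F ∈ K, ∀ G ⊆ F, G ∈ K

/-- The vertex set `V(K)` of a complex. -/
def verts (K : Set (Finset V)) : Set V :=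
  {v | ∃ F ∈ K, v ∈ F}

/-- The `d`-dimensional faces (cardinality `d+1`) of `K`. -/
def dfaces (K : Set (Finset V)) (d : ℕ) : Set (Finset V) :=
  {F | F ∈ K ∧ F.card = d + 1}

/-- `K` is pure `d`-dimensional: every face is contained in a `d`-face. -/
def IsPureD (K : Set (Finset V)) (d : ℕ) : Prop :=
  ∀ F ∈ K, ∃ G ∈ dfaces K d, F ⊆ G

/-- The complex generated by a set of facets. -/
def gen (S : Set (Finset V)) : Set (Finset V) :=
  {G | ∃ F ∈ S, G ⊆ F}

/-- The pure `d`-skeleton `K^{[d]}`: the complex whose facets are the `d`-faces of `K`. -/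
def skel (K : Set (Finset V)) (d : ℕ) : Set (Finset V) :=
  gen (dfaces K d)

/-- The induced subcomplex `K_W` on a set `W` of vertices. -/
def induced (K : Set (Finset V)) (W : Set V) : Set (Finset V) :=
  {F | F ∈ K ∧ ↑F ⊆ W}

/-- Two `d`-faces of `S` are adjacent in a `d`-path if they share `d` vertices. -/
def adj (S : Set (Finset V)) (d : ℕ) (F G : Finset V) : Prop :=
  F ∈ S ∧ G ∈ S ∧ (F ∩ G).card = d

/-- `d`-path-connectedness: any two `d`-faces are joined by a `d`-path. -/
def PathConn (K : Set (Finset V)) (d : ℕ) : Prop :=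
  ∀ F ∈ dfaces K d, ∀ G ∈ dfaces K d, Relation.ReflTransGen (adj (dfaces K d) d) F G

/-- A `d`-dimensional cycle: a pure `d`-dimensional, `d`-path-connected complex in which
every `(d-1)`-face lies in an even number of `d`-faces. -/
def IsCycle (Ω : Set (Finset V)) (d : ℕ) : Prop :=
  IsComplex Ω ∧ IsPureD Ω d ∧ (dfaces Ω d).Nonempty ∧ PathConn Ω d ∧
    ∀ f ∈ Ω, Finset.card f = d → Even {F | F ∈ dfaces Ω d ∧ f ⊆ F}.ncard

/-- A `d`-dimensional cycle in the complex `Γ`. -/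
def CycleIn (Γ Ω : Set (Finset V)) (d : ℕ) : Prop :=
  Ω ⊆ Γ ∧ IsCycle Ω d

/-- Face-minimality: no strict subset of the `d`-faces of `Ω` forms a `d`-dimensional cycle. -/
def FaceMinimal (Ω : Set (Finset V)) (d : ℕ) : Prop :=
  ∀ S : Set (Finset V), S ⊂ dfaces Ω d → ¬ IsCycle (gen S) d

/-- Vertex-minimality of a cycle `Ω` in `Γ`: no `d`-dimensional cycle in `Γ` lies on a
strict subset of the vertices of `Ω`. -/
def VertexMinimal (Γ Ω : Set (Finset V)) (d : ℕ) : Prop :=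
  ∀ Ω', CycleIn Γ Ω' d → ¬ (verts Ω' ⊂ verts Ω)

/-- `d`-completeness: every `(d+1)`-subset of the vertex set is a face. -/
def DComplete (K : Set (Finset V)) (d : ℕ) : Prop :=
  ∀ S : Finset V, ↑S ⊆ verts K → S.card = d + 1 → S ∈ K

/-- A chord set `C` of the `d`-dimensional cycle `Ω` in `Γ`. -/
def ChordSet (Γ Ω : Set (Finset V)) (d : ℕ) (C : Set (Finset V)) : Prop :=
  C ⊆ dfaces Γ d ∧ (∀ F ∈ C, F ∉ Ω) ∧ (∀ F ∈ C, ↑F ⊆ verts Ω) ∧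
    ∃ (n : ℕ) (Ωi : Fin n → Set (Finset V)), 2 ≤ n ∧ (∀ i, IsCycle (Ωi i) d) ∧
      (⋃ i, dfaces (Ωi i) d) = dfaces Ω d ∪ C ∧
      (∀ F ∈ C, Even {i | F ∈ dfaces (Ωi i) d}.ncard) ∧
      (∀ F ∈ dfaces Ω d, Odd {i | F ∈ dfaces (Ωi i) d}.ncard) ∧
      (∀ i, (verts (Ωi i)).ncard < (verts Ω).ncard)

/-- `Γ` is `d`-chorded: every face-minimal `d`-dimensional cycle in `Γ` that is not
`d`-complete has a chord set in `Γ`. -/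
def DChorded (Γ : Set (Finset V)) (d : ℕ) : Prop :=
  ∀ Ω, CycleIn Γ Ω d → FaceMinimal Ω d → ¬ DComplete Ω d → ∃ C, ChordSet Γ Ω d C

/-- `Γ` is `d`-cycle-complete: every vertex-minimal `d`-dimensional cycle in `Γ` is
`d`-complete. -/
def DCycleComplete (Γ : Set (Finset V)) (d : ℕ) : Prop :=
  ∀ Ω, CycleIn Γ Ω d → VertexMinimal Γ Ω d → DComplete Ω d

/-- The `d`-closure `Δ_d(K)` of the complex `K`, relative to the vertex set `W`:
it contains the faces of `K`, all subsets of `W` of size at most `d`, and every subset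
`S` of `W` with `|S| > d+1` all of whose `(d+1)`-subsets are faces of `K`. -/
def closure (W : Set V) (K : Set (Finset V)) (d : ℕ) : Set (Finset V) :=
  K ∪ {S | ↑S ⊆ W ∧ S.card ≤ d} ∪
    {S | ↑S ⊆ W ∧ d + 1 < S.card ∧ ∀ T ⊆ S, T.card = d + 1 → T ∈ K}

/-- A `d`-dimensional tree: a pure `d`-dimensional complex with no `d`-dimensional cycles. -/
def IsTree (K : Set (Finset V)) (d : ℕ) : Prop :=
  IsComplex K ∧ IsPureD K d ∧ ∀ Ω, ¬ CycleIn K Ω d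

/-- The unsigned boundary map on chains (appropriate over rings of characteristic 2):
a face is sent to the sum of the faces obtained by deleting one vertex. -/
noncomputable def ubd {R : Type*} [AddCommMonoid R] (c : Finset V →₀ R) : Finset V →₀ R :=
  c.sum fun F a => F.sum fun v => Finsupp.single (F.erase v) a

/-- The signed (oriented) boundary map on chains, the vertices of each face being listed
in increasing order. -/
noncomputable def sbd [LinearOrder V] {R : Type*} [Ring R] (c : Finset V →₀ R) : Finset V →₀ R :=
  c.sum fun F a =>
    F.sum fun v => Finsupp.single (F.erase v) ((-1 : R) ^ (F.filter fun w => w < v).card * a)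

/-- `c` is an `i`-chain on the complex `K`: it is supported on `i`-faces of `K`. -/
def ChainOn {R : Type*} [Zero R] (K : Set (Finset V)) (i : ℕ) (c : Finset V →₀ R) : Prop :=
  ∀ F ∈ c.support, F ∈ K ∧ F.card = i + 1

/-- Vanishing of the reduced simplicial homology `H̃_i(K; R)` for the unsigned boundary
map (this is reduced simplicial homology when `R` has characteristic 2): every `i`-chain
with vanishing boundary (for `i = 0`, the boundary at the empty face is the augmentation ε)
is the boundary of an `(i+1)`-chain. -/
def RedHomZeroU (K : Set (Finset V)) (R : Type*) [AddCommMonoid R] (i : ℕ) : Prop :=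
  ∀ c : Finset V →₀ R, ChainOn K i c → ubd c = 0 →
    ∃ b : Finset V →₀ R, ChainOn K (i + 1) b ∧ ubd b = c

/-- Vanishing of the reduced simplicial homology `H̃_i(K; R)` (oriented chains). -/
def RedHomZeroS [LinearOrder V] (K : Set (Finset V)) (R : Type*) [Ring R] (i : ℕ) : Prop :=
  ∀ c : Finset V →₀ R, ChainOn K i c → sbd c = 0 →
    ∃ b : Finset V →₀ R, ChainOn K (i + 1) b ∧ sbd b = c

/-- Orientability of a `d`-dimensional cycle: there is a choice of signs on its `d`-faces
making the resulting ℤ-chain have zero (oriented) boundary. -/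
def Orientable [LinearOrder V] (Ω : Set (Finset V)) (d : ℕ) : Prop :=
  ∃ c : Finset V →₀ ℤ, ↑c.support = dfaces Ω d ∧
    (∀ F ∈ c.support, c F = 1 ∨ c F = -1) ∧ sbd c = 0

/-- Orientable-vertex-minimality of a cycle `Ω` in `Γ`: no orientable `d`-dimensional
cycle in `Γ` lies on a strict subset of the vertices of `Ω`. -/
def OrientVertexMinimal [LinearOrder V] (Γ Ω : Set (Finset V)) (d : ℕ) : Prop :=
  ∀ Ω', CycleIn Γ Ω' d → Orientable Ω' d → ¬ (verts Ω' ⊂ verts Ω)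

/-- `Γ` is orientably-`d`-cycle-complete: every orientably-vertex-minimal (orientable)
`d`-dimensional cycle in `Γ` is `d`-complete. -/
def OrientDCycleComplete [LinearOrder V] (Γ : Set (Finset V)) (d : ℕ) : Prop :=
  ∀ Ω, CycleIn Γ Ω d → Orientable Ω d → OrientVertexMinimal Γ Ω d → DComplete Ω d

/-- A minimal non-face of `K`: a subset of the vertex set that is not a face, all of whose
proper subsets are faces. -/
def MinNonFace (K : Set (Finset V)) (S : Finset V) : Prop :=
  ↑S ⊆ verts K ∧ S ∉ K ∧ ∀ T ⊂ S, T ∈ K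

section FinsetOrder

variable {α : Type*} [DecidableEq α] [LinearOrder α] {S : Finset α} {u v : α}

lemma filter_lt_erase_of_lt (huv : u < v) : {w ∈ S.erase v | w < u} = {w ∈ S | w < u} := by
  rw [filter_erase]
  exact erase_eq_of_notMem (by simp [huv.le])

lemma card_filter_lt_erase_add_one (hu : u ∈ S) (huv : u < v) :
    #{w ∈ S.erase u | w < v} + 1 = #{w ∈ S | w < v} := by
  rw [filter_erase]
  exact card_erase_add_one (mem_filter.mpr ⟨hu, huv⟩)

end FinsetOrder

section OrientedBoundary

variable {α : Type*} [DecidableEq α] [LinearOrder α] {R : Type*} [CommRing R]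

lemma sbd_single (F : Finset α) (a : R) :
    sbd (Finsupp.single F a) =
      ∑ v ∈ F, Finsupp.single (F.erase v) ((-1 : R) ^ #{w ∈ F | w < v} * a) := by
  simp [sbd]

lemma sbd_zero : sbd (0 : Finset α →₀ R) = 0 := by
  simp [sbd]

lemma sbd_add (c₁ c₂ : Finset α →₀ R) : sbd (c₁ + c₂) = sbd c₁ + sbd c₂ := by
  refine Finsupp.sum_add_index' (fun F => by simp) fun F a b => ?_
  simp [mul_add, Finsupp.single_add, sum_add_distrib]

lemma sbd_sum {ι : Type*} (s : Finset ι) (c : ι → Finset α →₀ R) :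
    sbd (∑ i ∈ s, c i) = ∑ i ∈ s, sbd (c i) :=
  map_sum (AddMonoidHom.mk' (sbd (V := α) (R := R)) sbd_add) c s

lemma sbd_sbd_single (S : Finset α) (a : R) : sbd (sbd (Finsupp.single S a)) = 0 := by
  set g : α → α → Finset α →₀ R := fun v u => Finsupp.single ((S.erase v).erase u)
    ((-1 : R) ^ #{w ∈ S.erase v | w < u} * ((-1 : R) ^ #{w ∈ S | w < v} * a)) with hg
  have hexpand : sbd (sbd (Finsupp.single S a)) = ∑ v ∈ S, ∑ u ∈ S.erase v, g v u := by
    simp only [sbd_single, sbd_sum, hg]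
  -- Deleting `u < v` in either order gives the same face, with opposite signs.
  have hcancel : ∀ u ∈ S, ∀ v, u < v → g v u + g u v = 0 := by
    intro u hu v huv
    simp only [hg]
    rw [erase_right_comm, ← Finsupp.single_add, filter_lt_erase_of_lt huv,
      ← card_filter_lt_erase_add_one hu huv, pow_succ]
    refine (congrArg (Finsupp.single _) ?_).trans (Finsupp.single_zero _)
    ring
  rw [hexpand, sum_sigma']
  refine sum_involution (fun p _ => ⟨p.2, p.1⟩) (fun p hp => ?_) (fun p hp _ => ?_)
    (fun p hp => ?_) fun p _ => rfl
  all_goals obtain ⟨hv, hu, huv⟩ : p.1 ∈ S ∧ p.2 ∈ S ∧ p.2 ≠ p.1 := by simpa [and_comm] using hp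
  · rcases huv.lt_or_gt with h | h
    · exact hcancel _ hu _ h
    · rw [add_comm]; exact hcancel _ hv _ h
  · exact fun h => huv (congrArg Sigma.fst h)
  · simp only [mem_sigma, mem_erase]
    exact ⟨hu, huv.symm, hv⟩

lemma sbd_sbd (c : Finset α →₀ R) : sbd (sbd c) = 0 := by
  induction c using Finsupp.induction_linear with
  | zero => rw [sbd_zero, sbd_zero]
  | add c₁ c₂ h₁ h₂ => rw [sbd_add, sbd_add, h₁, h₂, add_zero]
  | single S a => exact sbd_sbd_single S a

lemma sbd_single_apply_erase {S : Finset α} {u : α} (hu : u ∈ S) (a : R) :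
    sbd (Finsupp.single S a) (S.erase u) = (-1 : R) ^ #{w ∈ S | w < u} * a := by
  rw [sbd_single, Finsupp.finsetSum_apply, sum_eq_single_of_mem u hu, Finsupp.single_eq_same]
  exact fun v hv hvu => Finsupp.single_eq_of_ne' (mt (erase_inj S hv).1 hvu)

lemma exists_erase_eq_of_mem_support_sbd_single {S T : Finset α} {a : R}
    (hT : T ∈ (sbd (Finsupp.single S a)).support) : ∃ u ∈ S, S.erase u = T := by
  by_contra! h
  rw [Finsupp.mem_support_iff, sbd_single, Finsupp.finsetSum_apply] at hT
  exact hT (sum_eq_zero fun v hv => Finsupp.single_eq_of_ne' (h v hv))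

end OrientedBoundary

lemma exists_eq_erase_of_subset_of_card_add_one {α : Type*} [DecidableEq α] {S T : Finset α}
    (hTS : T ⊆ S) (hcard : #T + 1 = #S) : ∃ u ∈ S, u ∉ T ∧ T = S.erase u := by
  obtain ⟨u, huT, rfl⟩ := exists_eq_insert_iff.mpr ⟨hTS, hcard⟩
  exact ⟨u, mem_insert_self u T, huT, (erase_insert huT).symm⟩

section Generated

variable {α : Type*} {A B : Set (Finset α)} {d : ℕ}

lemma gen_mono (h : A ⊆ B) : gen A ⊆ gen B :=
  fun _ ⟨F, hF, hGF⟩ => ⟨F, h hF, hGF⟩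

lemma isComplex_gen : IsComplex (gen A) :=
  fun _ ⟨F, hF, hGF⟩ _ hHG => ⟨F, hF, hHG.trans hGF⟩

lemma dfaces_gen (hA : ∀ F ∈ A, #F = d + 1) : dfaces (gen A) d = A := by
  ext G
  constructor
  · rintro ⟨⟨F, hF, hGF⟩, hG⟩
    rwa [eq_of_subset_of_card_le hGF (by rw [hA F hF, hG])]
  · exact fun hG => ⟨⟨G, hG, subset_rfl⟩, hA G hG⟩

lemma isPureD_gen (hA : ∀ F ∈ A, #F = d + 1) : IsPureD (gen A) d := by
  rintro G ⟨F, hF, hGF⟩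
  exact ⟨F, by rwa [dfaces_gen hA], hGF⟩

end Generated

section SimplexBoundary

variable {α : Type*} {S : Finset α} {d : ℕ}

/-- The complex generated by the `(d + 1)`-subsets of `S`: the boundary of the simplex on `S`
when `#S = d + 2`. -/
def simplexBoundary (S : Finset α) (d : ℕ) : Set (Finset α) :=
  gen ↑(S.powersetCard (d + 1))

lemma dfaces_simplexBoundary :
    dfaces (simplexBoundary S d) d = ↑(S.powersetCard (d + 1)) :=
  dfaces_gen fun _ hF => (mem_powersetCard.1 hF).2

lemma verts_simplexBoundary (hd : d + 1 ≤ #S) : verts (simplexBoundary S d) = ↑S := by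
  ext v
  constructor
  · rintro ⟨G, ⟨F, hF, hGF⟩, hvG⟩
    exact (mem_powersetCard.1 hF).1 (hGF hvG)
  · intro hv
    obtain ⟨F, hvF, hFS, hF⟩ :=
      exists_subsuperset_card_eq (singleton_subset_iff.2 hv) (by simp) hd
    exact ⟨F, ⟨F, mem_powersetCard.2 ⟨hFS, hF⟩, subset_rfl⟩, singleton_subset_iff.1 hvF⟩

variable [DecidableEq α]

lemma isCycle_simplexBoundary (hS : #S = d + 2) : IsCycle (simplexBoundary S d) d := by
  have hcard : ∀ F ∈ (S.powersetCard (d + 1) : Set (Finset α)), #F = d + 1 :=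
    fun _ hF => (mem_powersetCard.1 hF).2
  refine ⟨isComplex_gen, isPureD_gen hcard, ?_, ?_, ?_⟩
  · rw [dfaces_simplexBoundary, coe_nonempty, powersetCard_nonempty]
    omega
  · intro T hT T' hT'
    by_cases hTT' : T = T'
    · rw [hTT']
    refine .single ⟨hT, hT', ?_⟩
    rw [dfaces_simplexBoundary, mem_coe, mem_powersetCard] at hT hT'
    have hnsub : ¬ T ⊆ T' := fun h => hTT' (eq_of_subset_of_card_le h (by omega))
    have hinter := card_lt_card (inter_subset_left.ssubset_of_ne (mt inter_eq_left.1 hnsub))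
    have hunion := card_le_card (union_subset hT.1 hT'.1)
    have := card_union_add_card_inter T T'
    omega
  · rintro f ⟨F, hF, hfF⟩ hf
    have hfS : f ⊆ S := hfF.trans (mem_powersetCard.1 hF).1
    have hfaces : {G | G ∈ dfaces (simplexBoundary S d) d ∧ f ⊆ G} =
        (fun x => insert x f) '' ↑(S \ f) := by
      ext G
      simp only [dfaces_simplexBoundary, Set.mem_ofPred_eq, mem_coe, mem_powersetCard,
        Set.mem_image, mem_sdiff]
      constructor
      · rintro ⟨⟨hGS, hG⟩, hfG⟩
        obtain ⟨x, hxf, rfl⟩ := exists_eq_insert_iff.mpr ⟨hfG, by omega⟩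
        exact ⟨x, ⟨hGS (mem_insert_self x f), hxf⟩, rfl⟩
      · rintro ⟨x, ⟨hxS, hxf⟩, rfl⟩
        exact ⟨⟨insert_subset hxS hfS, by rw [card_insert_of_notMem hxf, hf]⟩, subset_insert x f⟩
    have hinj : Set.InjOn (fun x => insert x f) ↑(S \ f) :=
      fun x hx _ _ hxy => (insert_inj (mem_sdiff.1 hx).2).1 hxy
    rw [hfaces, hinj.ncard_image, Set.ncard_coe_finset, card_sdiff_of_subset hfS]
    exact ⟨1, by omega⟩

variable [LinearOrder α]

lemma orientable_simplexBoundary (hS : #S = d + 2) : Orientable (simplexBoundary S d) d := by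
  have hfaces : ∀ T, T ∈ S.powersetCard (d + 1) ↔ ∃ u ∈ S, S.erase u = T := by
    intro T
    rw [mem_powersetCard]
    constructor
    · rintro ⟨hTS, hT⟩
      obtain ⟨u, hu, -, rfl⟩ := exists_eq_erase_of_subset_of_card_add_one hTS (by omega)
      exact ⟨u, hu, rfl⟩
    · rintro ⟨u, hu, rfl⟩
      exact ⟨erase_subset u S, by rw [card_erase_of_mem hu]; omega⟩
  have hsign : ∀ u ∈ S, sbd (Finsupp.single S (1 : ℤ)) (S.erase u) = 1 ∨
      sbd (Finsupp.single S (1 : ℤ)) (S.erase u) = -1 := fun u hu => by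
    rw [sbd_single_apply_erase hu, mul_one]
    exact neg_one_pow_eq_or ℤ _
  refine ⟨sbd (Finsupp.single S 1), ?_, fun F hF => ?_, sbd_sbd _⟩
  · ext T
    rw [dfaces_simplexBoundary, mem_coe, mem_coe, hfaces]
    refine ⟨exists_erase_eq_of_mem_support_sbd_single, ?_⟩
    rintro ⟨u, hu, rfl⟩
    rw [Finsupp.mem_support_iff]
    rcases hsign u hu with h | h <;> simp [h]
  · obtain ⟨u, hu, rfl⟩ := exists_erase_eq_of_mem_support_sbd_single hF
    exact hsign u hu

end SimplexBoundary

lemma subset_of_mem_of_verts_subset {α : Type*} {Ω : Set (Finset α)} {S F : Finset α}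
    (hW : verts Ω ⊆ ↑S) (hF : F ∈ Ω) : F ⊆ S :=
  fun _ hv => hW ⟨F, hF, hv⟩

section CycleOnFewVertices

variable {α : Type*} [DecidableEq α] {Ω : Set (Finset α)} {S : Finset α} {d : ℕ}

/-- The `(d - 1)`-face `S \ {u, x}` lies only in the `d`-faces `S \ {u}` and `S \ {x}`, so by
parity it cannot lie in just one of them. -/
lemma IsCycle.erase_mem_of_erase_mem (hΩ : IsCycle Ω d) (hW : verts Ω ⊆ ↑S) (hS : #S = d + 2)
    {u x : α} (hu : u ∈ S) (huΩ : S.erase u ∈ Ω) (hx : x ∈ S) : S.erase x ∈ Ω := by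
  obtain ⟨hcx, -, -, -, heven⟩ := hΩ
  by_cases hxu : x = u
  · rwa [hxu]
  by_contra hxΩ
  have hxu' : x ∈ S.erase u := mem_erase.2 ⟨hxu, hx⟩
  have hcard : #(S.erase u) = d + 1 := by rw [card_erase_of_mem hu]; omega
  have hfaces : {G | G ∈ dfaces Ω d ∧ (S.erase u).erase x ⊆ G} = {S.erase u} := by
    ext G
    simp only [Set.mem_ofPred_eq, Set.mem_singleton_iff]
    constructor
    · rintro ⟨⟨hG, hGc⟩, hfG⟩
      obtain ⟨y, hy, hyG, rfl⟩ := exists_eq_erase_of_subset_of_card_add_one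
        (subset_of_mem_of_verts_subset hW hG) (by omega)
      have hyx : y ≠ x := by rintro rfl; exact hxΩ hG
      by_contra hyu
      exact hyG (hfG (mem_erase.2 ⟨hyx, mem_erase.2 ⟨fun h => hyu (by rw [h]), hy⟩⟩))
    · rintro rfl
      exact ⟨⟨huΩ, hcard⟩, erase_subset x _⟩
  have := heven _ (hcx _ huΩ _ (erase_subset x _)) (by rw [card_erase_of_mem hxu', hcard]; rfl)
  rw [hfaces, Set.ncard_singleton] at this
  exact Nat.not_even_one this

lemma IsCycle.dComplete_of_verts_subset (hΩ : IsCycle Ω d) (hW : verts Ω ⊆ ↑S)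
    (hS : #S = d + 2) : DComplete Ω d := by
  intro T hT hTc
  obtain ⟨F, hF, hFc⟩ := hΩ.2.2.1
  obtain ⟨u, hu, -, rfl⟩ :=
    exists_eq_erase_of_subset_of_card_add_one (subset_of_mem_of_verts_subset hW hF) (by omega)
  obtain ⟨x, hx, -, rfl⟩ :=
    exists_eq_erase_of_subset_of_card_add_one (coe_subset.1 (hT.trans hW)) (by omega)
  exact hΩ.erase_mem_of_erase_mem hW hS hu hF hx

end CycleOnFewVertices

theorem induced_on_cycle_dim_le_general {V : Type*} [DecidableEq V]
    [LinearOrder V] (Γ : Set (Finset V)) (d : ℕ) (hcomplex : IsComplex Γ)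
    (Ω : Set (Finset V)) (hΩ : CycleIn (skel Γ d) Ω d)
    (hmin : OrientVertexMinimal (skel Γ d) Ω d) (hnc : ¬ DComplete Ω d) :
    ∀ F ∈ induced Γ (verts Ω), F.card ≤ d + 1 := by
  rintro F ⟨hFΓ, hFW⟩
  by_contra! hF
  obtain ⟨S, hSF, hS⟩ := exists_subset_card_eq (show d + 2 ≤ #F by omega)
  have hsub : simplexBoundary S d ⊆ skel Γ d := gen_mono fun T hT => by
    rw [mem_coe, mem_powersetCard] at hT
    exact ⟨hcomplex F hFΓ T (hT.1.trans hSF), hT.2⟩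
  have hverts : verts (simplexBoundary S d) = ↑S := verts_simplexBoundary (by omega)
  have hWS : verts Ω ⊆ ↑S := by
    by_contra hWS
    refine hmin _ ⟨hsub, isCycle_simplexBoundary hS⟩ (orientable_simplexBoundary hS) ?_
    rw [hverts]
    exact ⟨fun v hv => hFW (hSF hv), hWS⟩
  exact hnc (hΩ.2.dComplete_of_verts_subset hWS hS)

/-- claim inside the proof of Theorem 6.1.1: if `Γ = Δ_d(Γ^{[d]})` and
`Ω` is an orientably-vertex-minimal `d`-dimensional cycle in `Γ^{[d]}` that is not
`d`-complete, then the induced subcomplex `Γ_{V(Ω)}` has dimension `d`, i.e. contains no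
face of cardinality greater than `d+1`. -/
theorem induced_on_cycle_dim_le {V : Type*} [DecidableEq V] [Fintype V]
    [LinearOrder V] (Γ : Set (Finset V)) (d : ℕ) (hcomplex : IsComplex Γ)
    (hcl : Γ = closure (verts Γ) (skel Γ d) d)
    (Ω : Set (Finset V)) (hΩ : CycleIn (skel Γ d) Ω d) (hor : Orientable Ω d)
    (hmin : OrientVertexMinimal (skel Γ d) Ω d) (hnc : ¬ DComplete Ω d) :
    ∀ F ∈ induced Γ (verts Ω), F.card ≤ d + 1 :=
  induced_on_cycle_dim_le_general Γ d hcomplex Ω hΩ hmin hnc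

end ChordedPaper
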